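/- Let n ≥ 1, μ ≥ 1, and λ_0, λ_1, …, λ_μ ∈ ℝ, with λ_d = 0 for d > μ. Let x ∈ {0,1}^n with bipolar version x̃ = 1 − 2x, set q_t = −Σ_{s=1}^n λ_{|t−s|} x̃_s (the noiseless matched-filter output), and define f(u) = Σ_t q_t u_t + Σ_{s<t: λ_{t−s}>0} λ_{t−s}|u_t − u_s| + Σ_{s<t: λ_{t−s}<0} |λ_{t−s}| |u_t + u_s − 1|. Suppose there exists a subset F ⊆ {1,…,n} such that d_F := −c_F − Σ_{t,s∈F, s<t} λ_{t−s} x̃_t x̃_s < 0, where c_F = |F| λ_0 + Σ_{t,s∈F, s<t} |λ_{t−s}|. Then the half-integral vector x̂ (with x̂_t = 1/2 for t ∈ F and x̂_t = x_t otherwise) satisfies f(x̂) < f(x); i.e., uncoded LP detection fails to return the transmitted sequence even in the absence of noise. -/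

import Mathlib

/-!
With zero noise the change of the objective is exact: `f x̂ - f x = d_F / 2`. For binary endpoints
the pairwise LP term with coefficient `a` equals `(|a| - a x̃_t x̃_s) / 2`; it equals `|a| / 2` when
exactly one endpoint is moved to `1/2`, and `0` when both are. Moving `x_t` to `1/2` for `t ∈ F`
changes the linear term by `-(1/2) Σ_{t∈F} Σ_s λ_{|t-s|} x̃_t x̃_s`. After symmetrising this double
sum, the pairs with exactly one endpoint in `F` cancel against the pairwise changes, and what is left
is `-(1/2) (|F| λ_0 + Σ_{s<t in F} (|λ_{t-s}| + λ_{t-s} x̃_t x̃_s)) = d_F / 2`.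
-/

open Finset

theorem sum_sum_eq_sum_diag_add_sum_lt {ι M : Type*} [Fintype ι] [LinearOrder ι]
    [AddCommMonoid M] (g : ι → ι → M) :
    ∑ t, ∑ s, g t s = ∑ t, g t t + ∑ t, ∑ s, if s < t then g t s + g s t else 0 := by
  have hsplit : ∀ t s, g t s = (if s = t then g t s else 0)
      + ((if s < t then g t s else 0) + (if t < s then g t s else 0)) := by
    intro t s
    rcases lt_trichotomy s t with h | rfl | h
    · simp [h, h.ne, h.not_gt]
    · simp
    · simp [h, h.ne', h.not_gt]
  have hswap : ∑ t, ∑ s, (if t < s then g t s else 0) = ∑ t, ∑ s, if s < t then g s t else 0 :=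
    sum_comm
  calc ∑ t, ∑ s, g t s
      = ∑ t, ∑ s, (if s = t then g t s else 0)
        + (∑ t, ∑ s, (if s < t then g t s else 0) + ∑ t, ∑ s, if t < s then g t s else 0) := by
        simp only [← sum_add_distrib, ← hsplit]
    _ = ∑ t, g t t + ∑ t, ∑ s, if s < t then g t s + g s t else 0 := by
        rw [hswap, ← sum_add_distrib]
        simp only [sum_ite_eq', mem_univ, if_true, ← sum_add_distrib, ite_add_zero]

noncomputable def pairTerm (a p r : ℝ) : ℝ :=
  (if 0 < a then a * |p - r| else 0) + (if a < 0 then |a| * |p + r - 1| else 0)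

lemma pairTerm_comm (a p r : ℝ) : pairTerm a p r = pairTerm a r p := by
  simp only [pairTerm, abs_sub_comm p r, add_comm p r]

lemma pairTerm_of_binary {a u v : ℝ} (hu : u = 0 ∨ u = 1) (hv : v = 0 ∨ v = 1) :
    pairTerm a u v = (|a| - a * ((1 - 2 * u) * (1 - 2 * v))) / 2 := by
  rcases lt_trichotomy a 0 with ha | ha | ha <;>
  rcases hu with rfl | rfl <;> rcases hv with rfl | rfl <;>
  norm_num [pairTerm, ha, ha.not_gt, abs_of_neg, abs_of_pos] <;> ring

lemma pairTerm_half_left {a v : ℝ} (hv : v = 0 ∨ v = 1) : pairTerm a (1 / 2) v = |a| / 2 := by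
  rcases lt_trichotomy a 0 with ha | ha | ha <;> rcases hv with rfl | rfl <;>
  norm_num [pairTerm, ha, ha.not_gt, abs_of_neg, abs_of_pos] <;> ring

lemma pairTerm_half_half (a : ℝ) : pairTerm a (1 / 2) (1 / 2) = 0 := by
  norm_num [pairTerm]

lemma pairTerm_ite_half {a u v : ℝ} (hu : u = 0 ∨ u = 1) (hv : v = 0 ∨ v = 1)
    (P Q : Prop) [Decidable P] [Decidable Q] :
    pairTerm a (if P then 1 / 2 else u) (if Q then 1 / 2 else v) =
      pairTerm a u v
        + ((if P then a * ((1 - 2 * u) * (1 - 2 * v)) else 0)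
          + (if Q then a * ((1 - 2 * u) * (1 - 2 * v)) else 0)) / 2
        - (if P ∧ Q then (|a| + a * ((1 - 2 * u) * (1 - 2 * v))) / 2 else 0) := by
  have hhalf_right : pairTerm a u (1 / 2) = |a| / 2 := by
    rw [pairTerm_comm, pairTerm_half_left hu]
  by_cases hP : P <;> by_cases hQ : Q <;>
    simp only [hP, hQ, if_true, if_false, and_self, and_false, false_and, pairTerm_half_half,
      pairTerm_half_left hv, hhalf_right, pairTerm_of_binary hu hv] <;>
    ring

section

variable {ι : Type*} [Fintype ι] [LinearOrder ι]

def bipolar (x : ι → ℝ) (t : ι) : ℝ := 1 - 2 * x t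

def noiselessOutput (K : ι → ι → ℝ) (x : ι → ℝ) (t : ι) : ℝ := -∑ s, K t s * bipolar x s

noncomputable def halfOn (F : Finset ι) (x : ι → ℝ) (t : ι) : ℝ := if t ∈ F then 1 / 2 else x t

noncomputable def lpObjective (K : ι → ι → ℝ) (q u : ι → ℝ) : ℝ :=
  ∑ t, q t * u t + ∑ t, ∑ s, if s < t then pairTerm (K t s) (u t) (u s) else 0

omit [Fintype ι] in
lemma halfOn_sub (F : Finset ι) (x : ι → ℝ) (t : ι) :
    halfOn F x t - x t = if t ∈ F then bipolar x t / 2 else 0 := by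
  unfold halfOn bipolar
  split_ifs <;> ring

lemma sum_noiselessOutput_mul_halfOn_sub (K : ι → ι → ℝ) (x : ι → ℝ) (F : Finset ι) :
    ∑ t, noiselessOutput K x t * halfOn F x t - ∑ t, noiselessOutput K x t * x t =
      -(1 / 2) * ∑ t, ∑ s, if t ∈ F then K t s * (bipolar x t * bipolar x s) else 0 := by
  simp only [← sum_sub_distrib, ← mul_sub, halfOn_sub, mul_sum]
  refine sum_congr rfl fun t _ => ?_
  split_ifs
  · simp only [noiselessOutput, neg_mul, sum_mul, ← sum_neg_distrib]
    exact sum_congr rfl fun s _ => by ring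
  · simp

lemma sum_pairTerm_halfOn_sub (K : ι → ι → ℝ) (hK : ∀ t s, K t s = K s t) (x : ι → ℝ)
    (hx : ∀ t, x t = 0 ∨ x t = 1) (F : Finset ι) :
    ∑ t, ∑ s, (if s < t then pairTerm (K t s) (halfOn F x t) (halfOn F x s) else 0)
      - ∑ t, ∑ s, (if s < t then pairTerm (K t s) (x t) (x s) else 0) =
      1 / 2 * ∑ t, ∑ s, (if s < t then (if t ∈ F then K t s * (bipolar x t * bipolar x s) else 0)
        + (if s ∈ F then K s t * (bipolar x s * bipolar x t) else 0) else 0)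
      - 1 / 2 * ∑ t ∈ F, ∑ s ∈ F,
        (if s < t then |K t s| + K t s * (bipolar x t * bipolar x s) else 0) := by
  simp only [← sum_ite_mem_eq F, ite_sum_zero, mul_sum, ← sum_sub_distrib]
  refine sum_congr rfl fun t _ => sum_congr rfl fun s _ => ?_
  unfold halfOn
  rw [pairTerm_ite_half (hx t) (hx s), hK s t]
  by_cases hst : s < t
  · by_cases ht : t ∈ F <;> by_cases hs : s ∈ F <;> simp [hst, ht, hs, bipolar] <;> ring
  · simp [hst]

theorem lpObjective_halfOn_sub (K : ι → ι → ℝ) (hK : ∀ t s, K t s = K s t) (x : ι → ℝ)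
    (hx : ∀ t, x t = 0 ∨ x t = 1) (F : Finset ι) :
    lpObjective K (noiselessOutput K x) (halfOn F x) - lpObjective K (noiselessOutput K x) x =
      -(1 / 2) * (∑ t ∈ F, K t t + ∑ t ∈ F, ∑ s ∈ F,
        if s < t then |K t s| + K t s * (bipolar x t * bipolar x s) else 0) := by
  have hlin := sum_noiselessOutput_mul_halfOn_sub K x F
  rw [sum_sum_eq_sum_diag_add_sum_lt] at hlin
  have hdiag : ∑ t, (if t ∈ F then K t t * (bipolar x t * bipolar x t) else 0) =
      ∑ t ∈ F, K t t := by
    have hsq : ∀ t, bipolar x t * bipolar x t = 1 := fun t => by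
      rcases hx t with h | h <;> norm_num [bipolar, h]
    simp only [hsq, mul_one, sum_ite_mem_eq]
  have hpair := sum_pairTerm_halfOn_sub K hK x hx F
  unfold lpObjective
  rw [add_sub_add_comm]
  linarith

end

lemma sum_pos_add_sum_neg_eq_sum_pairTerm {n : ℕ} (lam : ℕ → ℝ) (u : Fin n → ℝ) :
    (∑ t : Fin n, ∑ s : Fin n, if s < t ∧ 0 < lam ((t : ℕ) - (s : ℕ)) then
        lam ((t : ℕ) - (s : ℕ)) * |u t - u s| else 0)
      + (∑ t : Fin n, ∑ s : Fin n, if s < t ∧ lam ((t : ℕ) - (s : ℕ)) < 0 then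
        |lam ((t : ℕ) - (s : ℕ))| * |u t + u s - 1| else 0) =
      ∑ t : Fin n, ∑ s : Fin n,
        if s < t then pairTerm (lam (Nat.dist (t : ℕ) (s : ℕ))) (u t) (u s) else 0 := by
  simp only [← sum_add_distrib]
  refine sum_congr rfl fun t _ => sum_congr rfl fun s _ => ?_
  by_cases hst : s < t
  · simp [pairTerm, hst, Nat.dist_eq_sub_of_le_right hst.le]
  · simp [hst]

theorem lp_improper_noiseless_failure_general
    (n : ℕ)
    (lam : ℕ → ℝ)
    (x : Fin n → ℝ) (hx : ∀ t, x t = 0 ∨ x t = 1)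
    (xt : Fin n → ℝ) (hxt : ∀ t, xt t = 1 - 2 * x t)
    (q : Fin n → ℝ)
    (hq : ∀ t : Fin n, q t = -(∑ s : Fin n, lam (Nat.dist (t : ℕ) (s : ℕ)) * xt s))
    (f : (Fin n → ℝ) → ℝ)
    (hf : ∀ u : Fin n → ℝ, f u =
        (∑ t : Fin n, q t * u t)
        + (∑ t : Fin n, ∑ s : Fin n, if s < t ∧ 0 < lam ((t : ℕ) - (s : ℕ)) then
            lam ((t : ℕ) - (s : ℕ)) * |u t - u s| else 0)
        + (∑ t : Fin n, ∑ s : Fin n, if s < t ∧ lam ((t : ℕ) - (s : ℕ)) < 0 then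
            |lam ((t : ℕ) - (s : ℕ))| * |u t + u s - 1| else 0))
    (F : Finset (Fin n))
    (xhat : Fin n → ℝ) (hxhat : ∀ t, xhat t = if t ∈ F then 1/2 else x t)
    (cF : ℝ)
    (hcF : cF = (F.card : ℝ) * lam 0
        + ∑ t ∈ F, ∑ s ∈ F, (if s < t then |lam ((t : ℕ) - (s : ℕ))| else 0))
    (dF : ℝ)
    (hdF : dF = -cF
        - ∑ t ∈ F, ∑ s ∈ F, (if s < t then lam ((t : ℕ) - (s : ℕ)) * (xt t * xt s) else 0))
    (hneg : dF < 0) :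
    f xhat < f x := by
  set K : Fin n → Fin n → ℝ := fun t s => lam (Nat.dist t s)
  obtain rfl : xt = bipolar x := funext hxt
  obtain rfl : q = noiselessOutput K x := funext hq
  obtain rfl : xhat = halfOn F x := funext hxhat
  have hobj : ∀ u, f u = lpObjective K (noiselessOutput K x) u := fun u => by
    rw [hf, add_assoc, sum_pos_add_sum_neg_eq_sum_pairTerm, lpObjective]
  have hdiff := lpObjective_halfOn_sub K (fun t s => by simp only [K, Nat.dist_comm]) x hx F
  have hdiag : ∑ t ∈ F, K t t = F.card * lam 0 := by simp [K]
  have hoffdiag : ∑ t ∈ F, ∑ s ∈ F,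
      (if s < t then |K t s| + K t s * (bipolar x t * bipolar x s) else 0) =
      ∑ t ∈ F, ∑ s ∈ F, (if s < t then |lam ((t : ℕ) - (s : ℕ))| else 0)
        + ∑ t ∈ F, ∑ s ∈ F,
          (if s < t then lam ((t : ℕ) - (s : ℕ)) * (bipolar x t * bipolar x s) else 0) := by
    simp only [← sum_add_distrib]
    refine sum_congr rfl fun t _ => sum_congr rfl fun s _ => ?_
    by_cases hst : s < t
    · simp [K, hst, Nat.dist_eq_sub_of_le_right hst.le]
    · simp [hst]
  rw [hobj, hobj]
  linarith

/-- **Corollary (LP-improper channels), deterministic part.** With zero noise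
(`q_t = −Σ_s λ_{|t−s|} x̃_s`), if some fractional set `F` has negative distance
`d_F = −c_F − Σ_{t,s∈F,s<t} λ_{t−s} x̃_t x̃_s`, then the half-integral competitor
`x̂` beats the transmitted word: `f(x̂) < f(x)`. -/
theorem lp_improper_noiseless_failure
    (n μ : ℕ) (hn : 1 ≤ n) (hμ : 1 ≤ μ)
    (lam : ℕ → ℝ) (hlam : ∀ d : ℕ, μ < d → lam d = 0)
    (x : Fin n → ℝ) (hx : ∀ t, x t = 0 ∨ x t = 1)
    (xt : Fin n → ℝ) (hxt : ∀ t, xt t = 1 - 2 * x t)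
    (q : Fin n → ℝ)
    (hq : ∀ t : Fin n, q t = -(∑ s : Fin n, lam (Nat.dist (t : ℕ) (s : ℕ)) * xt s))
    (f : (Fin n → ℝ) → ℝ)
    (hf : ∀ u : Fin n → ℝ, f u =
        (∑ t : Fin n, q t * u t)
        + (∑ t : Fin n, ∑ s : Fin n, if s < t ∧ 0 < lam ((t : ℕ) - (s : ℕ)) then
            lam ((t : ℕ) - (s : ℕ)) * |u t - u s| else 0)
        + (∑ t : Fin n, ∑ s : Fin n, if s < t ∧ lam ((t : ℕ) - (s : ℕ)) < 0 then
            |lam ((t : ℕ) - (s : ℕ))| * |u t + u s - 1| else 0))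
    (F : Finset (Fin n))
    (xhat : Fin n → ℝ) (hxhat : ∀ t, xhat t = if t ∈ F then 1/2 else x t)
    (cF : ℝ)
    (hcF : cF = (F.card : ℝ) * lam 0
        + ∑ t ∈ F, ∑ s ∈ F, (if s < t then |lam ((t : ℕ) - (s : ℕ))| else 0))
    (dF : ℝ)
    (hdF : dF = -cF
        - ∑ t ∈ F, ∑ s ∈ F, (if s < t then lam ((t : ℕ) - (s : ℕ)) * (xt t * xt s) else 0))
    (hneg : dF < 0) :
    f xhat < f x :=
  lp_improper_noiseless_failure_general n lam x hx xt hxt q hq f hf F xhat hxhat cF hcF dF hdF hneg
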